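/- Let M ∈ ℝ with M² < 1 and let f : ℝ² → ℝ² be smooth and compactly supported. Then the quadratic form a(f,f) = ∫ (div f)² + ∫ (curl f)² − M² ∫ |∂f/∂x|² satisfies a(f,f) ≥ (1 − M²) ∫ |∇f|². In particular a(f,f) ≥ 0, with a(f,f) = 0 only if ∇f = 0. -/

import Mathlib

open MeasureTheory

/-- Partial derivative in the first variable of a scalar field on `ℝ²`. -/
noncomputable def pd1 (u : ℝ × ℝ → ℝ) (p : ℝ × ℝ) : ℝ :=
  deriv (fun x => u (x, p.2)) p.1

/-- Partial derivative in the second variable of a scalar field on `ℝ²`. -/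
noncomputable def pd2 (u : ℝ × ℝ → ℝ) (p : ℝ × ℝ) : ℝ :=
  deriv (fun y => u (p.1, y)) p.2

/-- Divergence of a planar vector field. -/
noncomputable def div2 (f : ℝ × ℝ → ℝ × ℝ) (p : ℝ × ℝ) : ℝ :=
  pd1 (fun q => (f q).1) p + pd2 (fun q => (f q).2) p

/-- Scalar curl of a planar vector field: `∂₁f₂ - ∂₂f₁`. -/
noncomputable def curl2 (f : ℝ × ℝ → ℝ × ℝ) (p : ℝ × ℝ) : ℝ :=
  pd1 (fun q => (f q).2) p - pd2 (fun q => (f q).1) p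

/-- `|∇f|² = Σᵢⱼ (∂ᵢfⱼ)²` for a planar vector field. -/
noncomputable def gradNormSq (f : ℝ × ℝ → ℝ × ℝ) (p : ℝ × ℝ) : ℝ :=
  pd1 (fun q => (f q).1) p ^ 2 + pd1 (fun q => (f q).2) p ^ 2
    + pd2 (fun q => (f q).1) p ^ 2 + pd2 (fun q => (f q).2) p ^ 2

/-! ### Auxiliary lemmas -/

lemma hasDerivAt_slice1 {u : ℝ × ℝ → ℝ} (hu : Differentiable ℝ u) (p : ℝ × ℝ) :
    HasDerivAt (fun x => u (x, p.2)) (fderiv ℝ u p ((1 : ℝ), (0 : ℝ))) p.1 := by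
  have h1 : HasDerivAt (fun x : ℝ => (x, p.2)) ((1 : ℝ), (0 : ℝ)) p.1 :=
    (hasDerivAt_id p.1).prodMk (hasDerivAt_const p.1 p.2)
  have := ((hu (p.1, p.2)).hasFDerivAt).comp_hasDerivAt p.1 h1
  exact this

lemma hasDerivAt_slice2 {u : ℝ × ℝ → ℝ} (hu : Differentiable ℝ u) (p : ℝ × ℝ) :
    HasDerivAt (fun y => u (p.1, y)) (fderiv ℝ u p ((0 : ℝ), (1 : ℝ))) p.2 := by
  have h1 : HasDerivAt (fun y : ℝ => (p.1, y)) ((0 : ℝ), (1 : ℝ)) p.2 :=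
    (hasDerivAt_const p.2 p.1).prodMk (hasDerivAt_id p.2)
  have := ((hu (p.1, p.2)).hasFDerivAt).comp_hasDerivAt p.2 h1
  exact this

lemma pd1_eq_fderiv {u : ℝ × ℝ → ℝ} (hu : Differentiable ℝ u) (p : ℝ × ℝ) :
    pd1 u p = fderiv ℝ u p ((1 : ℝ), (0 : ℝ)) :=
  (hasDerivAt_slice1 hu p).deriv

lemma pd2_eq_fderiv {u : ℝ × ℝ → ℝ} (hu : Differentiable ℝ u) (p : ℝ × ℝ) :
    pd2 u p = fderiv ℝ u p ((0 : ℝ), (1 : ℝ)) :=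
  (hasDerivAt_slice2 hu p).deriv

lemma pd1_funeq {u : ℝ × ℝ → ℝ} (hu : Differentiable ℝ u) :
    pd1 u = fun p => fderiv ℝ u p ((1 : ℝ), (0 : ℝ)) :=
  funext fun p => pd1_eq_fderiv hu p

lemma pd2_funeq {u : ℝ × ℝ → ℝ} (hu : Differentiable ℝ u) :
    pd2 u = fun p => fderiv ℝ u p ((0 : ℝ), (1 : ℝ)) :=
  funext fun p => pd2_eq_fderiv hu p

lemma contDiff_pd1 {u : ℝ × ℝ → ℝ} (hu : ContDiff ℝ (⊤ : ℕ∞) u) : ContDiff ℝ (⊤ : ℕ∞) (pd1 u) := by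
  rw [pd1_funeq (hu.differentiable (by simp))]
  exact (hu.fderiv_right (by simp)).clm_apply contDiff_const

lemma contDiff_pd2 {u : ℝ × ℝ → ℝ} (hu : ContDiff ℝ (⊤ : ℕ∞) u) : ContDiff ℝ (⊤ : ℕ∞) (pd2 u) := by
  rw [pd2_funeq (hu.differentiable (by simp))]
  exact (hu.fderiv_right (by simp)).clm_apply contDiff_const

lemma hcs_pd1 {u : ℝ × ℝ → ℝ} (hu : ContDiff ℝ (⊤ : ℕ∞) u) (hs : HasCompactSupport u) :
    HasCompactSupport (pd1 u) := by
  rw [pd1_funeq (hu.differentiable (by simp))]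
  exact (hs.fderiv ℝ).comp_left (g := fun L : ℝ × ℝ →L[ℝ] ℝ => L ((1 : ℝ), (0 : ℝ))) (by simp)

lemma hcs_pd2 {u : ℝ × ℝ → ℝ} (hu : ContDiff ℝ (⊤ : ℕ∞) u) (hs : HasCompactSupport u) :
    HasCompactSupport (pd2 u) := by
  rw [pd2_funeq (hu.differentiable (by simp))]
  exact (hs.fderiv ℝ).comp_left (g := fun L : ℝ × ℝ →L[ℝ] ℝ => L ((0 : ℝ), (1 : ℝ))) (by simp)

/-- Clairaut for smooth planar scalar fields. -/
lemma pd_mixed {u : ℝ × ℝ → ℝ} (hu : ContDiff ℝ (⊤ : ℕ∞) u) (p : ℝ × ℝ) :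
    pd1 (pd2 u) p = pd2 (pd1 u) p := by
  set F := fderiv ℝ u with hF
  have hFc : ContDiff ℝ (⊤ : ℕ∞) F := hu.fderiv_right (by simp)
  have hFd : Differentiable ℝ F := hFc.differentiable (by simp)
  set f'' := fderiv ℝ F p with hf''
  have hsym : ∀ v w, f'' v w = f'' w v :=
    second_derivative_symmetric (fun y => (hu.differentiable (by simp) y).hasFDerivAt)
      (hFd p).hasFDerivAt
  have hd1 : HasDerivAt (fun x => F (x, p.2)) (f'' ((1 : ℝ), (0 : ℝ))) p.1 := by
    have h1 : HasDerivAt (fun x : ℝ => (x, p.2)) ((1 : ℝ), (0 : ℝ)) p.1 :=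
      (hasDerivAt_id p.1).prodMk (hasDerivAt_const p.1 p.2)
    have := ((hFd (p.1, p.2)).hasFDerivAt).comp_hasDerivAt p.1 h1
    exact this
  have hd2 : HasDerivAt (fun y => F (p.1, y)) (f'' ((0 : ℝ), (1 : ℝ))) p.2 := by
    have h1 : HasDerivAt (fun y : ℝ => (p.1, y)) ((0 : ℝ), (1 : ℝ)) p.2 :=
      (hasDerivAt_const p.2 p.1).prodMk (hasDerivAt_id p.2)
    have := ((hFd (p.1, p.2)).hasFDerivAt).comp_hasDerivAt p.2 h1
    exact this
  have ha : HasDerivAt (fun x => F (x, p.2) ((0 : ℝ), (1 : ℝ)))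
      (f'' ((1 : ℝ), (0 : ℝ)) ((0 : ℝ), (1 : ℝ))) p.1 := by
    have := hd1.clm_apply (hasDerivAt_const p.1 ((0 : ℝ), (1 : ℝ)))
    simpa using this
  have hb : HasDerivAt (fun y => F (p.1, y) ((1 : ℝ), (0 : ℝ)))
      (f'' ((0 : ℝ), (1 : ℝ)) ((1 : ℝ), (0 : ℝ))) p.2 := by
    have := hd2.clm_apply (hasDerivAt_const p.2 ((1 : ℝ), (0 : ℝ)))
    simpa using this
  have e1 : pd1 (pd2 u) p = f'' ((1 : ℝ), (0 : ℝ)) ((0 : ℝ), (1 : ℝ)) := by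
    rw [pd2_funeq (hu.differentiable (by simp))]
    exact ha.deriv
  have e2 : pd2 (pd1 u) p = f'' ((0 : ℝ), (1 : ℝ)) ((1 : ℝ), (0 : ℝ)) := by
    rw [pd1_funeq (hu.differentiable (by simp))]
    exact hb.deriv
  rw [e1, e2, hsym]

/-- Product rule for `pd1`. -/
lemma pd1_mul {u v : ℝ × ℝ → ℝ} (hu : Differentiable ℝ u) (hv : Differentiable ℝ v)
    (p : ℝ × ℝ) :
    pd1 (fun q => u q * v q) p = pd1 u p * v p + u p * pd1 v p := by
  have := ((hasDerivAt_slice1 hu p).mul (hasDerivAt_slice1 hv p)).deriv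
  rw [pd1, show (fun x => u (x, p.2) * v (x, p.2)) = (fun x => u (x, p.2)) * (fun x => v (x, p.2)) from rfl, this, pd1_eq_fderiv hu, pd1_eq_fderiv hv]

/-- Product rule for `pd2`. -/
lemma pd2_mul {u v : ℝ × ℝ → ℝ} (hu : Differentiable ℝ u) (hv : Differentiable ℝ v)
    (p : ℝ × ℝ) :
    pd2 (fun q => u q * v q) p = pd2 u p * v p + u p * pd2 v p := by
  have := ((hasDerivAt_slice2 hu p).mul (hasDerivAt_slice2 hv p)).deriv
  rw [pd2, show (fun y => u (p.1, y) * v (p.1, y)) = (fun y => u (p.1, y)) * (fun y => v (p.1, y)) from rfl, this, pd2_eq_fderiv hu, pd2_eq_fderiv hv]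

/-- Integral of the derivative of a compactly supported smooth function on `ℝ` vanishes. -/
lemma integral_deriv_zero_1d {g : ℝ → ℝ} (hg : ContDiff ℝ (⊤ : ℕ∞) g) (hs : HasCompactSupport g) :
    ∫ x, deriv g x = 0 := by
  obtain ⟨R, hR⟩ := hs.isCompact.isBounded.subset_closedBall 0
  set a : ℝ := -(|R| + 1) with ha
  set b : ℝ := |R| + 1 with hb
  have hRb : Metric.closedBall (0 : ℝ) R ⊆ Set.Ioc a b := by
    intro x hx
    rw [Metric.mem_closedBall, Real.dist_eq, sub_zero] at hx
    have h1 : |x| ≤ |R| := le_trans hx (le_abs_self R)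
    rw [abs_le] at h1
    constructor <;> simp only [ha, hb] <;> linarith [h1.1, h1.2]
  have hsub : Function.support (deriv g) ⊆ Set.Ioc a b :=
    fun x hx => hRb (hR (support_deriv_subset hx))
  have hga : g a = 0 := by
    apply image_eq_zero_of_notMem_tsupport
    intro h
    have := hR h
    rw [Metric.mem_closedBall, Real.dist_eq, sub_zero] at this
    have : |a| ≤ |R| := le_trans this (le_abs_self R)
    simp only [ha, hb, abs_neg, abs_of_nonneg (by positivity : (0:ℝ) ≤ |R| + 1)] at this
    linarith
  have hgb : g b = 0 := by
    apply image_eq_zero_of_notMem_tsupport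
    intro h
    have := hR h
    rw [Metric.mem_closedBall, Real.dist_eq, sub_zero] at this
    have : |b| ≤ |R| := le_trans this (le_abs_self R)
    simp only [hb, abs_of_nonneg (by positivity : (0:ℝ) ≤ |R| + 1)] at this
    linarith
  have hkey : ∫ x in a..b, deriv g x = g b - g a :=
    intervalIntegral.integral_deriv_eq_sub
      (fun x _ => (hg.differentiable (by simp)).differentiableAt)
      ((hg.continuous_deriv (by simp)).intervalIntegrable a b)
  rw [← intervalIntegral.integral_eq_integral_of_support_subset hsub, hkey, hga, hgb, sub_zero]

lemma hcs_slice1 {h : ℝ × ℝ → ℝ} (hs : HasCompactSupport h) (y : ℝ) :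
    HasCompactSupport (fun x => h (x, y)) := by
  apply HasCompactSupport.intro (hs.isCompact.image continuous_fst)
  intro x hx
  by_contra hne
  exact hx ⟨(x, y), subset_tsupport h hne, rfl⟩

lemma hcs_slice2 {h : ℝ × ℝ → ℝ} (hs : HasCompactSupport h) (x : ℝ) :
    HasCompactSupport (fun y => h (x, y)) := by
  apply HasCompactSupport.intro (hs.isCompact.image continuous_snd)
  intro y hy
  by_contra hne
  exact hy ⟨(x, y), subset_tsupport h hne, rfl⟩

lemma contDiff_slice1 {h : ℝ × ℝ → ℝ} (hh : ContDiff ℝ (⊤ : ℕ∞) h) (y : ℝ) :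
    ContDiff ℝ (⊤ : ℕ∞) (fun x => h (x, y)) :=
  hh.comp (contDiff_id.prodMk contDiff_const)

lemma contDiff_slice2 {h : ℝ × ℝ → ℝ} (hh : ContDiff ℝ (⊤ : ℕ∞) h) (x : ℝ) :
    ContDiff ℝ (⊤ : ℕ∞) (fun y => h (x, y)) :=
  hh.comp (contDiff_const.prodMk contDiff_id)

/-- The integral of `∂₁h` over `ℝ²` vanishes for smooth compactly supported `h`. -/
lemma integral_pd1_zero {h : ℝ × ℝ → ℝ} (hh : ContDiff ℝ (⊤ : ℕ∞) h) (hs : HasCompactSupport h) :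
    ∫ p, pd1 h p = 0 := by
  have hint : Integrable (pd1 h) :=
    (contDiff_pd1 hh).continuous.integrable_of_hasCompactSupport (hcs_pd1 hh hs)
  have hint' : Integrable (pd1 h) (volume.prod volume) := by
    rwa [← MeasureTheory.Measure.volume_eq_prod]
  have hvol : (volume : Measure (ℝ × ℝ)) = volume.prod volume :=
    MeasureTheory.Measure.volume_eq_prod ℝ ℝ
  rw [hvol, MeasureTheory.integral_prod_symm _ hint']
  have hinner : ∀ y : ℝ, (∫ x, pd1 h (x, y)) = 0 := by
    intro y
    have : ∀ x : ℝ, pd1 h (x, y) = deriv (fun x' => h (x', y)) x := fun x => rfl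
    simp only [this]
    exact integral_deriv_zero_1d (contDiff_slice1 hh y) (hcs_slice1 hs y)
  simp only [hinner, integral_zero]

/-- The integral of `∂₂h` over `ℝ²` vanishes for smooth compactly supported `h`. -/
lemma integral_pd2_zero {h : ℝ × ℝ → ℝ} (hh : ContDiff ℝ (⊤ : ℕ∞) h) (hs : HasCompactSupport h) :
    ∫ p, pd2 h p = 0 := by
  have hint : Integrable (pd2 h) :=
    (contDiff_pd2 hh).continuous.integrable_of_hasCompactSupport (hcs_pd2 hh hs)
  have hint' : Integrable (pd2 h) (volume.prod volume) := by
    rwa [← MeasureTheory.Measure.volume_eq_prod]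
  have hvol : (volume : Measure (ℝ × ℝ)) = volume.prod volume :=
    MeasureTheory.Measure.volume_eq_prod ℝ ℝ
  rw [hvol, MeasureTheory.integral_prod _ hint']
  have hinner : ∀ x : ℝ, (∫ y, pd2 h (x, y)) = 0 := by
    intro x
    have : ∀ y : ℝ, pd2 h (x, y) = deriv (fun y' => h (x, y')) y := fun y => rfl
    simp only [this]
    exact integral_deriv_zero_1d (contDiff_slice2 hh x) (hcs_slice2 hs x)
  simp only [hinner, integral_zero]

/-- Integration by parts: `∫ ∂₁u ∂₂v = ∫ ∂₂u ∂₁v`. -/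
lemma ibp_swap {u v : ℝ × ℝ → ℝ} (hu : ContDiff ℝ (⊤ : ℕ∞) u) (hsu : HasCompactSupport u)
    (hv : ContDiff ℝ (⊤ : ℕ∞) v) (hsv : HasCompactSupport v) :
    ∫ p, pd1 u p * pd2 v p = ∫ p, pd2 u p * pd1 v p := by
  have hud := hu.differentiable (by simp)
  have hvd := hv.differentiable (by simp)
  set h₁ : ℝ × ℝ → ℝ := fun p => u p * pd2 v p with hh₁
  set h₂ : ℝ × ℝ → ℝ := fun p => u p * pd1 v p with hh₂
  have hh₁c : ContDiff ℝ (⊤ : ℕ∞) h₁ := hu.mul (contDiff_pd2 hv)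
  have hh₂c : ContDiff ℝ (⊤ : ℕ∞) h₂ := hu.mul (contDiff_pd1 hv)
  have hh₁s : HasCompactSupport h₁ := hsu.mul_right
  have hh₂s : HasCompactSupport h₂ := hsu.mul_right
  have hA : Integrable (fun p => pd1 u p * pd2 v p) :=
    ((contDiff_pd1 hu).continuous.mul (contDiff_pd2 hv).continuous).integrable_of_hasCompactSupport
      ((hcs_pd1 hu hsu).mul_right)
  have hB : Integrable (fun p => pd2 u p * pd1 v p) :=
    ((contDiff_pd2 hu).continuous.mul (contDiff_pd1 hv).continuous).integrable_of_hasCompactSupport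
      ((hcs_pd2 hu hsu).mul_right)
  have hC : Integrable (pd1 h₁) :=
    (contDiff_pd1 hh₁c).continuous.integrable_of_hasCompactSupport (hcs_pd1 hh₁c hh₁s)
  have hD : Integrable (pd2 h₂) :=
    (contDiff_pd2 hh₂c).continuous.integrable_of_hasCompactSupport (hcs_pd2 hh₂c hh₂s)
  have hAB : ∀ p, pd1 u p * pd2 v p - pd2 u p * pd1 v p = pd1 h₁ p - pd2 h₂ p := by
    intro p
    have e1 : pd1 h₁ p = pd1 u p * pd2 v p + u p * pd1 (pd2 v) p :=
      pd1_mul hud ((contDiff_pd2 hv).differentiable (by simp)) p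
    have e2 : pd2 h₂ p = pd2 u p * pd1 v p + u p * pd2 (pd1 v) p :=
      pd2_mul hud ((contDiff_pd1 hv).differentiable (by simp)) p
    rw [e1, e2, pd_mixed hv p]
    ring
  have hzero : ∫ p, (pd1 h₁ p - pd2 h₂ p) = 0 := by
    rw [MeasureTheory.integral_sub hC hD, integral_pd1_zero hh₁c hh₁s,
      integral_pd2_zero hh₂c hh₂s, sub_zero]
  have : ∫ p, (pd1 u p * pd2 v p - pd2 u p * pd1 v p) = 0 := by
    rw [show (fun p => pd1 u p * pd2 v p - pd2 u p * pd1 v p)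
        = fun p => pd1 h₁ p - pd2 h₂ p from funext hAB]
    exact hzero
  rw [MeasureTheory.integral_sub hA hB] at this
  linarith


/-! ### Integrability helpers -/

lemma hcs_sq {g : ℝ × ℝ → ℝ} (hs : HasCompactSupport g) :
    HasCompactSupport (fun p => g p ^ 2) :=
  hs.comp_left (g := fun x : ℝ => x ^ 2) (by simp)

lemma integrable_gradNormSq {f : ℝ × ℝ → ℝ × ℝ} (hf : ContDiff ℝ (⊤ : ℕ∞) f)
    (hs : HasCompactSupport f) : Integrable (gradNormSq f) := by
  have hu : ContDiff ℝ (⊤ : ℕ∞) (fun q => (f q).1) := contDiff_fst.comp hf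
  have hv : ContDiff ℝ (⊤ : ℕ∞) (fun q => (f q).2) := contDiff_snd.comp hf
  have hsu : HasCompactSupport (fun q => (f q).1) :=
    hs.comp_left (g := Prod.fst) rfl
  have hsv : HasCompactSupport (fun q => (f q).2) :=
    hs.comp_left (g := Prod.snd) rfl
  have hc : Continuous (gradNormSq f) := by
    unfold gradNormSq
    exact ((((contDiff_pd1 hu).continuous.pow 2).add
      ((contDiff_pd1 hv).continuous.pow 2)).add
      ((contDiff_pd2 hu).continuous.pow 2)).add ((contDiff_pd2 hv).continuous.pow 2)
  have hcs : HasCompactSupport (gradNormSq f) := by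
    have := (((hcs_sq (hcs_pd1 hu hsu)).add (hcs_sq (hcs_pd1 hv hsv))).add
      (hcs_sq (hcs_pd2 hu hsu))).add (hcs_sq (hcs_pd2 hv hsv))
    exact this
  exact hc.integrable_of_hasCompactSupport hcs

/-- Costabel's identity: `∫ (div f)² + ∫ (curl f)² = ∫ |∇f|²`. -/
lemma costabel {f : ℝ × ℝ → ℝ × ℝ} (hf : ContDiff ℝ (⊤ : ℕ∞) f) (hs : HasCompactSupport f) :
    (∫ p, (div2 f p) ^ 2) + (∫ p, (curl2 f p) ^ 2) = ∫ p, gradNormSq f p := by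
  have hu : ContDiff ℝ (⊤ : ℕ∞) (fun q => (f q).1) := contDiff_fst.comp hf
  have hv : ContDiff ℝ (⊤ : ℕ∞) (fun q => (f q).2) := contDiff_snd.comp hf
  have hsu : HasCompactSupport (fun q => (f q).1) :=
    hs.comp_left (g := Prod.fst) rfl
  have hsv : HasCompactSupport (fun q => (f q).2) :=
    hs.comp_left (g := Prod.snd) rfl
  have hcdiv : Continuous (div2 f) := by
    unfold div2
    exact (contDiff_pd1 hu).continuous.add (contDiff_pd2 hv).continuous
  have hccurl : Continuous (curl2 f) := by
    unfold curl2
    exact (contDiff_pd1 hv).continuous.sub (contDiff_pd2 hu).continuous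
  have hsdiv : HasCompactSupport (div2 f) := by
    have := (hcs_pd1 hu hsu).add (hcs_pd2 hv hsv)
    exact this
  have hscurl : HasCompactSupport (curl2 f) := by
    have h1 := (hcs_pd1 hv hsv).add ((hcs_pd2 hu hsu).comp_left (g := fun x : ℝ => -x) neg_zero)
    apply h1.mono'
    intro p hp
    apply subset_tsupport
    have hne : curl2 f p ≠ 0 := hp
    simp only [curl2] at hne
    simpa [Function.mem_support, Function.comp, sub_eq_add_neg] using hne
  have i1 : Integrable (fun p => div2 f p ^ 2) :=
    (hcdiv.pow 2).integrable_of_hasCompactSupport (hcs_sq hsdiv)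
  have i2 : Integrable (fun p => curl2 f p ^ 2) :=
    (hccurl.pow 2).integrable_of_hasCompactSupport (hcs_sq hscurl)
  have iG : Integrable (gradNormSq f) := integrable_gradNormSq hf hs
  have iad : Integrable (fun p => pd1 (fun q => (f q).1) p * pd2 (fun q => (f q).2) p) :=
    ((contDiff_pd1 hu).continuous.mul
      (contDiff_pd2 hv).continuous).integrable_of_hasCompactSupport
      ((hcs_pd1 hu hsu).mul_right)
  have icb : Integrable (fun p => pd2 (fun q => (f q).1) p * pd1 (fun q => (f q).2) p) :=
    ((contDiff_pd2 hu).continuous.mul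
      (contDiff_pd1 hv).continuous).integrable_of_hasCompactSupport
      ((hcs_pd2 hu hsu).mul_right)
  have e : ∀ p, div2 f p ^ 2 + curl2 f p ^ 2
      = gradNormSq f p
        + 2 * (pd1 (fun q => (f q).1) p * pd2 (fun q => (f q).2) p)
        - 2 * (pd2 (fun q => (f q).1) p * pd1 (fun q => (f q).2) p) := by
    intro p
    simp only [div2, curl2, gradNormSq]
    ring
  have hibp : (∫ p, pd1 (fun q => (f q).1) p * pd2 (fun q => (f q).2) p)
      = ∫ p, pd2 (fun q => (f q).1) p * pd1 (fun q => (f q).2) p :=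
    ibp_swap hu hsu hv hsv
  calc (∫ p, div2 f p ^ 2) + (∫ p, curl2 f p ^ 2)
      = ∫ p, (div2 f p ^ 2 + curl2 f p ^ 2) := (integral_add i1 i2).symm
    _ = ∫ p, (gradNormSq f p
          + 2 * (pd1 (fun q => (f q).1) p * pd2 (fun q => (f q).2) p)
          - 2 * (pd2 (fun q => (f q).1) p * pd1 (fun q => (f q).2) p)) := by
        simp only [e]
    _ = (∫ p, (gradNormSq f p
          + 2 * (pd1 (fun q => (f q).1) p * pd2 (fun q => (f q).2) p)))
          - ∫ p, 2 * (pd2 (fun q => (f q).1) p * pd1 (fun q => (f q).2) p) :=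
        integral_sub (iG.add (iad.const_mul 2)) (icb.const_mul 2)
    _ = (∫ p, gradNormSq f p)
          + (∫ p, 2 * (pd1 (fun q => (f q).1) p * pd2 (fun q => (f q).2) p))
          - ∫ p, 2 * (pd2 (fun q => (f q).1) p * pd1 (fun q => (f q).2) p) := by
        rw [integral_add iG (iad.const_mul 2)]
    _ = ∫ p, gradNormSq f p := by
        rw [MeasureTheory.integral_const_mul, MeasureTheory.integral_const_mul, hibp]
        ring

/-- Coercivity of the spatial bilinear form of the regularized Galbrun equation
with `s = 1` in the subsonic case `M² < 1`. -/
theorem galbrun_form_coercive (M : ℝ) (hM : M ^ 2 < 1)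
    (f : ℝ × ℝ → ℝ × ℝ) (hf : ContDiff ℝ (⊤ : ℕ∞) f) (hsupp : HasCompactSupport f) :
    ((∫ p, (div2 f p) ^ 2) + (∫ p, (curl2 f p) ^ 2)
        - M ^ 2 * ∫ p, (pd1 (fun q => (f q).1) p ^ 2 + pd1 (fun q => (f q).2) p ^ 2)
      ≥ (1 - M ^ 2) * ∫ p, gradNormSq f p)
    ∧ ((∫ p, (div2 f p) ^ 2) + (∫ p, (curl2 f p) ^ 2)
        - M ^ 2 * ∫ p, (pd1 (fun q => (f q).1) p ^ 2 + pd1 (fun q => (f q).2) p ^ 2)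
      ≥ 0)
    ∧ ((∫ p, (div2 f p) ^ 2) + (∫ p, (curl2 f p) ^ 2)
        - M ^ 2 * ∫ p, (pd1 (fun q => (f q).1) p ^ 2 + pd1 (fun q => (f q).2) p ^ 2)
          = 0 →
        ∀ p, pd1 (fun q => (f q).1) p = 0 ∧ pd1 (fun q => (f q).2) p = 0
          ∧ pd2 (fun q => (f q).1) p = 0 ∧ pd2 (fun q => (f q).2) p = 0) := by

  have hu : ContDiff ℝ (⊤ : ℕ∞) (fun q => (f q).1) := contDiff_fst.comp hf
  have hv : ContDiff ℝ (⊤ : ℕ∞) (fun q => (f q).2) := contDiff_snd.comp hf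
  have hsu : HasCompactSupport (fun q => (f q).1) :=
    hsupp.comp_left (g := Prod.fst) rfl
  have hsv : HasCompactSupport (fun q => (f q).2) :=
    hsupp.comp_left (g := Prod.snd) rfl
  have hCost := costabel hf hsupp
  have iG : Integrable (gradNormSq f) := integrable_gradNormSq hf hsupp
  have iJ : Integrable (fun p => pd1 (fun q => (f q).1) p ^ 2
      + pd1 (fun q => (f q).2) p ^ 2) :=
    (((contDiff_pd1 hu).continuous.pow 2).add
      ((contDiff_pd1 hv).continuous.pow 2)).integrable_of_hasCompactSupport
      ((hcs_sq (hcs_pd1 hu hsu)).add (hcs_sq (hcs_pd1 hv hsv)))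
  have hJI : (∫ p, (pd1 (fun q => (f q).1) p ^ 2 + pd1 (fun q => (f q).2) p ^ 2))
      ≤ ∫ p, gradNormSq f p := by
    apply integral_mono iJ iG
    intro p
    simp only [gradNormSq]
    nlinarith [sq_nonneg (pd2 (fun q => (f q).1) p), sq_nonneg (pd2 (fun q => (f q).2) p)]
  have hInn : 0 ≤ ∫ p, gradNormSq f p := by
    apply integral_nonneg
    intro p
    simp only [gradNormSq, Pi.zero_apply]
    positivity
  have hM2 : (0 : ℝ) ≤ M ^ 2 := sq_nonneg M
  set I := ∫ p, gradNormSq f p with hI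
  set J := ∫ p, (pd1 (fun q => (f q).1) p ^ 2 + pd1 (fun q => (f q).2) p ^ 2) with hJ
  have hJnn : 0 ≤ J := by
    rw [hJ]
    apply integral_nonneg
    intro p
    simp only [Pi.zero_apply]
    positivity
  refine ⟨?_, ?_, ?_⟩
  · rw [hCost]
    nlinarith
  · rw [hCost]
    nlinarith
  · intro h0
    rw [hCost] at h0
    have hI0 : I = 0 := by nlinarith
    have hG0 : gradNormSq f = 0 := by
      have hae : gradNormSq f =ᵐ[volume] 0 :=
        (integral_eq_zero_iff_of_nonneg (fun p => by
          simp only [gradNormSq, Pi.zero_apply]; positivity) iG).mp hI0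
      have hcont : Continuous (gradNormSq f) := by
        unfold gradNormSq
        exact ((((contDiff_pd1 hu).continuous.pow 2).add
          ((contDiff_pd1 hv).continuous.pow 2)).add
          ((contDiff_pd2 hu).continuous.pow 2)).add ((contDiff_pd2 hv).continuous.pow 2)
      exact (hcont.ae_eq_iff_eq volume continuous_const).mp hae
    intro p
    have hp : gradNormSq f p = 0 := by rw [hG0]; rfl
    simp only [gradNormSq] at hp
    have h1 : pd1 (fun q => (f q).1) p = 0 := by nlinarith [sq_nonneg (pd1 (fun q => (f q).1) p), sq_nonneg (pd1 (fun q => (f q).2) p), sq_nonneg (pd2 (fun q => (f q).1) p), sq_nonneg (pd2 (fun q => (f q).2) p)]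
    have h2 : pd1 (fun q => (f q).2) p = 0 := by nlinarith [sq_nonneg (pd1 (fun q => (f q).1) p), sq_nonneg (pd1 (fun q => (f q).2) p), sq_nonneg (pd2 (fun q => (f q).1) p), sq_nonneg (pd2 (fun q => (f q).2) p)]
    have h3 : pd2 (fun q => (f q).1) p = 0 := by nlinarith [sq_nonneg (pd1 (fun q => (f q).1) p), sq_nonneg (pd1 (fun q => (f q).2) p), sq_nonneg (pd2 (fun q => (f q).1) p), sq_nonneg (pd2 (fun q => (f q).2) p)]
    have h4 : pd2 (fun q => (f q).2) p = 0 := by nlinarith [sq_nonneg (pd1 (fun q => (f q).1) p), sq_nonneg (pd1 (fun q => (f q).2) p), sq_nonneg (pd2 (fun q => (f q).1) p), sq_nonneg (pd2 (fun q => (f q).2) p)]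
    exact ⟨h1, h2, h3, h4⟩
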